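/- arXiv:2103.04988 — 6 statements merged into one kernel-verified Lean document; each statement's English description precedes it below -/
import Mathlib

section
/- If for each m the quantity β_m equals D(1 + e_m) with D ≠ 0 a constant independent of m and |e_m| ≤ C·Δx² for Δx small, and d_0 + d_1 + d_2 = 1 with each d_m > 0, then the WENO-JS weights ω_m = α_m / Σα_i with α_m = d_m / β_m² (ε = 0) satisfy |ω_m − d_m| ≤ C'·Δx² for some constant C' and all sufficiently small Δx. -/
set_option maxHeartbeats 2000000

lemma sq_diff_bound (K x y : ℝ) (hK : 0 ≤ K) (hx1 : |x - 1| ≤ K) (hy1 : |y - 1| ≤ K)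
    (hxl : (3:ℝ)/4 ≤ x) (hxu : x ≤ 5/4) (hyl : (3:ℝ)/4 ≤ y) (hyu : y ≤ 5/4) :
    |y^2 - x^2| ≤ 5 * K := by
  have h := abs_le.mp hx1
  have h' := abs_le.mp hy1
  have hs : y - x ≤ 2*K := by linarith
  have hs2 : -(2*K) ≤ y - x := by linarith
  have hp : (0:ℝ) ≤ y + x := by linarith
  have hpu : y + x ≤ 5/2 := by linarith
  rw [abs_le]
  constructor <;> nlinarith [mul_le_mul_of_nonneg_right hs hp, mul_le_mul_of_nonneg_right hs2 hp]

lemma weno_aux (C t D : ℝ) (hC : 0 ≤ C) (ht : 0 < t) (hD : D ≠ 0) (hCt : C * t ≤ 1/4)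
    (a b c : ℝ) (ha : 0 < a) (hb : 0 < b) (hc : 0 < c) (hsum : a + b + c = 1)
    (x y z : ℝ) (hx : |x - 1| ≤ C * t) (hy : |y - 1| ≤ C * t) (hz : |z - 1| ≤ C * t) :
    |a / (D*x)^2 / (a / (D*x)^2 + b / (D*y)^2 + c / (D*z)^2) - a| ≤ (216*C + 1) * t := by
  have hx' := abs_le.mp hx
  have hy' := abs_le.mp hy
  have hz' := abs_le.mp hz
  have hxl : (3:ℝ)/4 ≤ x := by linarith
  have hxu : x ≤ 5/4 := by linarith
  have hyl : (3:ℝ)/4 ≤ y := by linarith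
  have hyu : y ≤ 5/4 := by linarith
  have hzl : (3:ℝ)/4 ≤ z := by linarith
  have hzu : z ≤ 5/4 := by linarith
  have hx0 : x ≠ 0 := by positivity
  have hy0 : y ≠ 0 := by positivity
  have hz0 : z ≠ 0 := by positivity
  have hx2 : (9:ℝ)/16 ≤ x^2 := by nlinarith
  have hy2 : (9:ℝ)/16 ≤ y^2 := by nlinarith
  have hz2 : (9:ℝ)/16 ≤ z^2 := by nlinarith
  have hx2u : x^2 ≤ 25/16 := by nlinarith
  have hy2u : y^2 ≤ 25/16 := by nlinarith
  have hz2u : z^2 ≤ 25/16 := by nlinarith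
  set T := a*y^2*z^2 + b*x^2*z^2 + c*x^2*y^2 with hT
  have h1 : (9:ℝ)/16*(9/16) ≤ y^2*z^2 := mul_le_mul hy2 hz2 (by norm_num) (by positivity)
  have h2 : (9:ℝ)/16*(9/16) ≤ x^2*z^2 := mul_le_mul hx2 hz2 (by norm_num) (by positivity)
  have h3 : (9:ℝ)/16*(9/16) ≤ x^2*y^2 := mul_le_mul hx2 hy2 (by norm_num) (by positivity)
  have hTpos : (81:ℝ)/256 ≤ T := by
    rw [hT]
    nlinarith [mul_le_mul_of_nonneg_left h1 ha.le, mul_le_mul_of_nonneg_left h2 hb.le,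
      mul_le_mul_of_nonneg_left h3 hc.le]
  have hT0 : (0:ℝ) < T := by linarith
  have hS : 0 < a / (D*x)^2 + b / (D*y)^2 + c / (D*z)^2 := by positivity
  have heq : a / (D*x)^2 / (a / (D*x)^2 + b / (D*y)^2 + c / (D*z)^2) - a
      = a * (y^2*z^2 - T) / T := by
    rw [hT]
    field_simp
  rw [heq, abs_div, abs_of_pos hT0, div_le_iff₀ hT0]
  have hyx : |y^2 - x^2| ≤ 5 * (C * t) := sq_diff_bound _ _ _ (by positivity) hx hy hxl hxu hyl hyu
  have hzx : |z^2 - x^2| ≤ 5 * (C * t) := sq_diff_bound _ _ _ (by positivity) hx hz hxl hxu hzl hzu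
  have e1 : y^2*z^2 - T = b*z^2*(y^2-x^2) + c*y^2*(z^2-x^2) := by
    rw [hT]; linear_combination (-(y^2*z^2)) * hsum
  have hb1 : |b*z^2*(y^2-x^2)| ≤ b * (25/16) * (5*(C*t)) := by
    rw [abs_mul, abs_mul, abs_of_pos hb, abs_of_pos (by positivity : (0:ℝ) < z^2)]
    have hK : (0:ℝ) ≤ C * t := by positivity
    nlinarith [mul_le_mul_of_nonneg_left hyx (by positivity : (0:ℝ) ≤ b*z^2),
      mul_le_mul_of_nonneg_left hz2u (by positivity : (0:ℝ) ≤ b*(5*(C*t))), abs_nonneg (y^2-x^2)]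
  have hc1 : |c*y^2*(z^2-x^2)| ≤ c * (25/16) * (5*(C*t)) := by
    rw [abs_mul, abs_mul, abs_of_pos hc, abs_of_pos (by positivity : (0:ℝ) < y^2)]
    have hK : (0:ℝ) ≤ C * t := by positivity
    nlinarith [mul_le_mul_of_nonneg_left hzx (by positivity : (0:ℝ) ≤ c*y^2),
      mul_le_mul_of_nonneg_left hy2u (by positivity : (0:ℝ) ≤ c*(5*(C*t))), abs_nonneg (z^2-x^2)]
  have htot : |y^2*z^2 - T| ≤ 125/16 * (C*t) := by
    calc |y^2*z^2 - T| ≤ |b*z^2*(y^2-x^2)| + |c*y^2*(z^2-x^2)| := by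
          rw [e1]; exact abs_add_le _ _
      _ ≤ 125/16 * (C*t) := by nlinarith [mul_nonneg hC ht.le]
  have hfin : |a * (y^2*z^2 - T)| ≤ 125/16 * (C*t) := by
    rw [abs_mul, abs_of_pos ha]
    nlinarith [abs_nonneg (y^2*z^2 - T)]
  have hQ : 0 ≤ C * t := mul_nonneg hC ht.le
  nlinarith [mul_le_mul_of_nonneg_left hTpos (by positivity : (0:ℝ) ≤ (216*C+1)*t)]

theorem wenoJS_weights_second_order (D C : ℝ) (hD : D ≠ 0) (hC : 0 ≤ C)
    (d : Fin 3 → ℝ) (hd : ∀ m, 0 < d m) (hdsum : d 0 + d 1 + d 2 = 1) :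
    ∃ C' > (0 : ℝ), ∃ δ > (0 : ℝ), ∀ Δx : ℝ, 0 < Δx → Δx < δ →
      ∀ e β : Fin 3 → ℝ, (∀ m, |e m| ≤ C * Δx ^ 2) → (∀ m, β m = D * (1 + e m)) →
        ∀ m : Fin 3,
          |(d m / (β m) ^ 2) / (d 0 / (β 0) ^ 2 + d 1 / (β 1) ^ 2 + d 2 / (β 2) ^ 2) - d m|
            ≤ C' * Δx ^ 2 := by
  refine ⟨216*C + 1, by positivity, 1/(C+1), by positivity, ?_⟩
  intro Δx hΔ hΔδ e β he hβ m
  have ht : (0:ℝ) < Δx^2 := by positivity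
  have hCt : C * Δx^2 ≤ 1/4 := by
    have h1 : Δx^2 < (1/(C+1))^2 := by
      have := mul_self_lt_mul_self hΔ.le hΔδ
      simpa [pow_two] using this
    have h2 : C * Δx^2 ≤ C * (1/(C+1))^2 := by nlinarith
    have h3 : C * (1/(C+1))^2 ≤ 1/4 := by
      have hp : (0:ℝ) < (C+1)^2 := by positivity
      rw [div_pow, one_pow, mul_one_div, div_le_iff₀ hp]
      nlinarith [sq_nonneg (C - 1)]
    linarith
  have hb0 : β 0 = D * (1 + e 0) := hβ 0
  have hb1 : β 1 = D * (1 + e 1) := hβ 1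
  have hb2 : β 2 = D * (1 + e 2) := hβ 2
  have hx0 : |(1 + e 0) - 1| ≤ C * Δx^2 := by simpa using he 0
  have hx1 : |(1 + e 1) - 1| ≤ C * Δx^2 := by simpa using he 1
  have hx2 : |(1 + e 2) - 1| ≤ C * Δx^2 := by simpa using he 2
  fin_cases m <;> simp only [Fin.zero_eta, Fin.mk_one, Fin.reduceFinMk, Fin.isValue]
  · rw [hb0, hb1, hb2]
    exact weno_aux C (Δx^2) D hC ht hD hCt (d 0) (d 1) (d 2) (hd 0) (hd 1) (hd 2) hdsum
      _ _ _ hx0 hx1 hx2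
  · rw [hb0, hb1, hb2]
    have hcomm : d 0 / (D*(1+e 0))^2 + d 1 / (D*(1+e 1))^2 + d 2 / (D*(1+e 2))^2
        = d 1 / (D*(1+e 1))^2 + d 0 / (D*(1+e 0))^2 + d 2 / (D*(1+e 2))^2 := by ring
    rw [hcomm]
    exact weno_aux C (Δx^2) D hC ht hD hCt (d 1) (d 0) (d 2) (hd 1) (hd 0) (hd 2)
      (by linarith) _ _ _ hx1 hx0 hx2
  · rw [hb0, hb1, hb2]
    have hcomm : d 0 / (D*(1+e 0))^2 + d 1 / (D*(1+e 1))^2 + d 2 / (D*(1+e 2))^2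
        = d 2 / (D*(1+e 2))^2 + d 0 / (D*(1+e 0))^2 + d 1 / (D*(1+e 1))^2 := by ring
    rw [hcomm]
    exact weno_aux C (Δx^2) D hC ht hD hCt (d 2) (d 0) (d 1) (hd 2) (hd 0) (hd 1)
      (by linarith) _ _ _ hx2 hx0 hx1
end

section
/- If β_m = D̃(1 + e_m) with D̃ ≠ 0 independent of m and |e_m| ≤ C·Δx for small Δx, and d_m > 0 with Σd_m = 1, then the WENO-JS weights ω_m = (d_m/β_m²) / Σ_i (d_i/β_i²) satisfy ω_m = d_m + O(Δx), i.e. |ω_m − d_m| ≤ C'·Δx for small Δx. -/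
/-!
After dividing out `D²`, the weights are `ω_m = d_m r_m / ∑ d_i r_i` with `r_i = (1 + e_i)⁻²`.
As `∑ d_i = 1`, the denominator is a convex combination of the `r_i`, so
`ω_m - d_m = d_m (r_m - ∑ d_i r_i) / ∑ d_i r_i` is at most the oscillation of `r` divided by a
lower bound of `r`. For `|e_i| ≤ 1/2` we have `r_i ≥ 4/9`, and `x ↦ (1 + x)⁻²` is `16`-Lipschitz on
`[-1/2, ∞)`, so the oscillation is `O(C Δx)`.
-/

open Finset

theorem abs_sub_weightedSum_le {ι : Type*} [Fintype ι] {d r : ι → ℝ} {η : ℝ}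
    (hd : ∀ i, 0 ≤ d i) (hsum : ∑ i, d i = 1) (hosc : ∀ i j, |r i - r j| ≤ η) (m : ι) :
    |r m - ∑ i, d i * r i| ≤ η := by
  have hrm : r m - ∑ i, d i * r i = ∑ i, d i * (r m - r i) := by
    simp only [mul_sub, sum_sub_distrib, ← sum_mul, hsum, one_mul]
  calc |r m - ∑ i, d i * r i| = |∑ i, d i * (r m - r i)| := by rw [hrm]
    _ ≤ ∑ i, |d i * (r m - r i)| := abs_sum_le_sum_abs _ _
    _ ≤ ∑ i, d i * η := by
        gcongr with i
        rw [abs_mul, abs_of_nonneg (hd i)]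
        exact mul_le_mul_of_nonneg_left (hosc m i) (hd i)
    _ = η := by rw [← sum_mul, hsum, one_mul]

theorem le_weightedSum_of_le {ι : Type*} [Fintype ι] {d r : ι → ℝ} {c : ℝ}
    (hd : ∀ i, 0 ≤ d i) (hsum : ∑ i, d i = 1) (hr : ∀ i, c ≤ r i) :
    c ≤ ∑ i, d i * r i :=
  calc c = ∑ i, d i * c := by rw [← sum_mul, hsum, one_mul]
    _ ≤ ∑ i, d i * r i := by gcongr with i; exact hd i; exact hr i

theorem abs_mul_div_weightedSum_sub_le {ι : Type*} [Fintype ι] {d r : ι → ℝ} {c η : ℝ}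
    (hd : ∀ i, 0 ≤ d i) (hsum : ∑ i, d i = 1) (hc : 0 < c) (hr : ∀ i, c ≤ r i)
    (hosc : ∀ i j, |r i - r j| ≤ η) (m : ι) :
    |d m * r m / ∑ i, d i * r i - d m| ≤ η / c := by
  set S := ∑ i, d i * r i
  have hcS : c ≤ S := le_weightedSum_of_le hd hsum hr
  have hS : 0 < S := hc.trans_le hcS
  have hη : 0 ≤ η := (abs_nonneg _).trans (hosc m m)
  have hdm : d m ≤ 1 := hsum ▸ single_le_sum (fun i _ => hd i) (mem_univ m)
  calc |d m * r m / S - d m| = d m * |r m - S| / S := by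
        rw [show d m * r m / S - d m = d m * (r m - S) / S by field_simp,
          abs_div, abs_mul, abs_of_nonneg (hd m), abs_of_pos hS]
    _ ≤ 1 * η / c := by
        gcongr
        exact abs_sub_weightedSum_le hd hsum hosc m
    _ = η / c := by rw [one_mul]

theorem four_ninths_le_inv_one_add_sq {x : ℝ} (hx : |x| ≤ 1 / 2) : 4 / 9 ≤ ((1 + x) ^ 2)⁻¹ := by
  obtain ⟨hl, hu⟩ := abs_le.mp hx
  rw [le_inv_comm₀ (by norm_num) (by nlinarith)]
  nlinarith

theorem abs_inv_one_add_sq_sub_le {x y : ℝ} (hx : -(1 / 2) ≤ x) (hy : -(1 / 2) ≤ y) :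
    |((1 + x) ^ 2)⁻¹ - ((1 + y) ^ 2)⁻¹| ≤ 16 * |x - y| := by
  set a := 1 + x
  set b := 1 + y
  have ha : 1 / 2 ≤ a := by linarith
  have hb : 1 / 2 ≤ b := by linarith
  have hab : (a ^ 2)⁻¹ - (b ^ 2)⁻¹ = (y - x) * ((a * b ^ 2)⁻¹ + (a ^ 2 * b)⁻¹) := by
    field_simp
    ring
  have h1 : (a * b ^ 2)⁻¹ ≤ 8 := by
    rw [inv_le_comm₀ (by positivity) (by norm_num)]
    nlinarith [mul_le_mul ha (pow_le_pow_left₀ (by norm_num) hb 2) (by norm_num) (by linarith)]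
  have h2 : (a ^ 2 * b)⁻¹ ≤ 8 := by
    rw [inv_le_comm₀ (by positivity) (by norm_num)]
    nlinarith [mul_le_mul (pow_le_pow_left₀ (by norm_num) ha 2) hb (by norm_num) (by positivity)]
  rw [hab, abs_mul, abs_sub_comm, abs_of_pos (by positivity : 0 < (a * b ^ 2)⁻¹ + (a ^ 2 * b)⁻¹)]
  nlinarith [abs_nonneg (x - y)]

theorem wenoDS_JS_weights_first_order (D C : ℝ) (hD : D ≠ 0) (hC : 0 ≤ C)
    (d : Fin 3 → ℝ) (hd : ∀ m, 0 < d m) (hdsum : d 0 + d 1 + d 2 = 1) :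
    ∃ C' > (0 : ℝ), ∃ δ > (0 : ℝ), ∀ Δx : ℝ, 0 < Δx → Δx < δ →
      ∀ e β : Fin 3 → ℝ, (∀ m, |e m| ≤ C * Δx) → (∀ m, β m = D * (1 + e m)) →
        ∀ m : Fin 3,
          |(d m / (β m) ^ 2) / (d 0 / (β 0) ^ 2 + d 1 / (β 1) ^ 2 + d 2 / (β 2) ^ 2) - d m|
            ≤ C' * Δx := by
  refine ⟨72 * C + 1, by positivity, 1 / (2 * (C + 1)), by positivity, ?_⟩
  intro Δx hΔx hΔxδ e β he hβ m
  set r : Fin 3 → ℝ := fun i => ((1 + e i) ^ 2)⁻¹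
  have hCΔx : C * Δx ≤ 1 / 2 :=
    calc C * Δx ≤ C * (1 / (2 * (C + 1))) := by gcongr
      _ ≤ 1 / 2 := by rw [mul_one_div, div_le_div_iff₀ (by positivity) two_pos]; linarith
  have he_half (i : Fin 3) : -(1 / 2) ≤ e i := (abs_le.mp ((he i).trans hCΔx)).1
  have hosc (i j : Fin 3) : |r i - r j| ≤ 32 * (C * Δx) :=
    calc |r i - r j| ≤ 16 * |e i - e j| := abs_inv_one_add_sq_sub_le (he_half i) (he_half j)
      _ ≤ 16 * (|e i| + |e j|) := by gcongr; exact abs_sub _ _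
      _ ≤ 32 * (C * Δx) := by linarith [he i, he j]
  have hterm (i : Fin 3) : d i / β i ^ 2 = d i * r i / D ^ 2 := by
    simp only [r, hβ i, mul_pow, div_eq_mul_inv, mul_inv]
    ring
  have hω : d m / β m ^ 2 / (d 0 / β 0 ^ 2 + d 1 / β 1 ^ 2 + d 2 / β 2 ^ 2)
      = d m * r m / ∑ i, d i * r i := by
    rw [Fin.sum_univ_three, hterm, hterm, hterm, hterm, ← add_div, ← add_div,
      div_div_div_cancel_right₀ (pow_ne_zero 2 hD)]
  rw [hω]
  calc _ ≤ 32 * (C * Δx) / (4 / 9) :=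
        abs_mul_div_weightedSum_sub_le (fun i => (hd i).le) (by rwa [Fin.sum_univ_three])
          (by norm_num) (fun i => four_ninths_le_inv_one_add_sq ((he i).trans hCΔx)) hosc m
    _ ≤ (72 * C + 1) * Δx := by linarith
end

section
/- Suppose β_m = b·Δx² + e_m with b > 0 and |e_m| ≤ C·Δx³ for each m = 0,1,2, and τ = |β_0 − β_2|, so that |τ| ≤ C₁·Δx⁵. Then for sufficiently small Δx > 0, the quantities α_m = d_m(1 + (τ/β_m)²) with d_m > 0 satisfy α_m = d_m(1 + O(Δx⁶)), i.e. |α_m − d_m| ≤ C₂·d_m·Δx⁶. -/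
theorem wenoZ_alpha_sixth_order (b C C₁ : ℝ) (hb : 0 < b) (hC : 0 ≤ C) (hC₁ : 0 ≤ C₁)
    (d : Fin 3 → ℝ) (hd : ∀ m, 0 < d m) :
    ∃ C₂ > (0 : ℝ), ∃ δ > (0 : ℝ), ∀ Δx : ℝ, 0 < Δx → Δx < δ →
      ∀ β e : Fin 3 → ℝ, (∀ m, β m = b * Δx ^ 2 + e m) → (∀ m, |e m| ≤ C * Δx ^ 3) →
        |β 0 - β 2| ≤ C₁ * Δx ^ 5 →
        ∀ m : Fin 3,
          |d m * (1 + (|β 0 - β 2| / β m) ^ 2) - d m| ≤ C₂ * d m * Δx ^ 6 := by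
  refine ⟨4 * C₁ ^ 2 / b ^ 2 + 1, by positivity, b / (2 * (C + 1)), by positivity, ?_⟩
  intro Δx hΔx hδ β e hβ he hτ m
  have hCx : C * Δx ≤ b / 2 := by
    have h1 : C * Δx ≤ C * (b / (2 * (C + 1))) :=
      mul_le_mul_of_nonneg_left hδ.le hC
    rw [mul_div_assoc'] at h1
    have h2 : C * b / (2 * (C + 1)) ≤ b / 2 := by
      rw [div_le_div_iff₀ (by positivity) (by norm_num)]
      nlinarith
    linarith
  have hβm : b * Δx ^ 2 / 2 ≤ β m := by
    have h1 : -(C * Δx ^ 3) ≤ e m := (abs_le.mp (he m)).1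
    rw [hβ m]
    nlinarith [sq_nonneg Δx]
  have hβpos : 0 < β m := lt_of_lt_of_le (by positivity) hβm
  have hτ2 : (|β 0 - β 2| / β m) ^ 2 ≤ (4 * C₁ ^ 2 / b ^ 2) * Δx ^ 6 := by
    rw [div_pow, div_le_iff₀ (by positivity)]
    have h1 : |β 0 - β 2| ^ 2 ≤ (C₁ * Δx ^ 5) ^ 2 := by
      apply sq_le_sq'
      · nlinarith [abs_nonneg (β 0 - β 2)]
      · exact hτ
    have h2 : (b * Δx ^ 2 / 2) ^ 2 ≤ (β m) ^ 2 :=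
      pow_le_pow_left₀ (by positivity) hβm 2
    have hb2 : (0:ℝ) < b ^ 2 := by positivity
    rw [div_mul_eq_mul_div, div_mul_eq_mul_div, le_div_iff₀ hb2]
    have A := mul_le_mul_of_nonneg_right h1 hb2.le
    have B := mul_le_mul_of_nonneg_left h2
      (show (0:ℝ) ≤ 4 * C₁ ^ 2 * Δx ^ 6 by positivity)
    nlinarith [A, B]
  have heq : |d m * (1 + (|β 0 - β 2| / β m) ^ 2) - d m|
      = d m * (|β 0 - β 2| / β m) ^ 2 := by
    rw [mul_add, mul_one, add_sub_cancel_left, abs_of_nonneg (mul_nonneg (hd m).le (sq_nonneg _))]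
  rw [heq]
  have hd' := (hd m).le
  nlinarith [mul_le_mul_of_nonneg_left hτ2 hd', mul_nonneg hd' (by positivity : (0:ℝ) ≤ Δx ^ 6)]
end

section
/- For a three times differentiable function f and grid values f_{i+j} = f(x_i + jΔx), the smoothness indicator β_1 = (13/12)(f_{i−1} − 2f_i + f_{i+1})² + (1/4)(f_{i+1} − f_{i−1})² satisfies β_1 = f'(x_i)²Δx² + O(Δx⁴) as Δx → 0. -/
set_option maxHeartbeats 1000000

open Set

private lemma iterWithin_eq {n m : ℕ} (hm : (m : ℕ∞) ≤ n) {f : ℝ → ℝ} (hf : ContDiff ℝ n f)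
    {s : Set ℝ} (hs : UniqueDiffOn ℝ s) {x : ℝ} (hx : x ∈ s) :
    iteratedDerivWithin m f s x = iteratedDeriv m f x := by
  have H : HasFTaylorSeriesUpToOn n f (ftaylorSeries ℝ f) s := by
    have := (contDiffOn_univ.mpr hf).ftaylorSeriesWithin uniqueDiffOn_univ
    rw [ftaylorSeriesWithin_univ] at this
    exact this.mono (subset_univ s)
  have h := H.eq_iteratedFDerivWithin_of_uniqueDiffOn (mod_cast hm) hs hx
  rw [iteratedDerivWithin_eq_iteratedFDerivWithin, iteratedDeriv_eq_iteratedFDeriv, ← h]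
  rfl

private lemma taylor2_bound {f : ℝ → ℝ} (hf : ContDiff ℝ 3 f) {x h M : ℝ} (hh : 0 < h)
    (hM : ∀ y ∈ Icc x (x + h), |iteratedDeriv 3 f y| ≤ M) :
    |f (x + h) - (f x + deriv f x * h + iteratedDeriv 2 f x * h ^ 2 / 2)| ≤ M * h ^ 3 / 2 := by
  have hlt : x < x + h := by linarith
  have hud := uniqueDiffOn_Icc hlt
  have hxm : x ∈ Icc x (x + h) := left_mem_Icc.2 hlt.le
  have heq : ∀ k : ℕ, (k : ℕ∞) ≤ 3 → iteratedDerivWithin k f (Icc x (x + h)) x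
      = iteratedDeriv k f x := fun k hk => iterWithin_eq hk hf hud hxm
  have hC : ∀ y ∈ Icc x (x + h),
      ‖iteratedDerivWithin 3 f (Icc x (x + h)) y‖ ≤ M := by
    intro y hy
    rw [show iteratedDerivWithin 3 f (Icc x (x + h)) y = iteratedDeriv 3 f y from
      iterWithin_eq le_rfl hf hud hy]
    exact hM y hy
  have hT := taylor_mean_remainder_bound (n := 2) hlt.le
    (hf.contDiffOn (s := Icc x (x + h))) (right_mem_Icc.2 hlt.le) hC
  rw [taylor_within_apply] at hT
  simp only [Finset.sum_range_succ, Finset.sum_range_zero] at hT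
  rw [heq 0 (by norm_num), heq 1 (by norm_num), heq 2 (by norm_num)] at hT
  simp only [iteratedDeriv_zero, iteratedDeriv_one, smul_eq_mul] at hT
  have h2 : x + h - x = h := by ring
  rw [h2, Real.norm_eq_abs] at hT
  refine le_trans (le_of_eq ?_) (hT.trans (le_of_eq ?_))
  · congr 1; simp only [Nat.factorial, Nat.cast_ofNat, Nat.cast_one, pow_zero, pow_one]; norm_num; ring
  · simp [Nat.factorial]


private lemma taylor2_bound_neg {f : ℝ → ℝ} (hf : ContDiff ℝ 3 f) {x h M : ℝ} (hh : 0 < h)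
    (hM : ∀ y ∈ Icc (x - h) x, |iteratedDeriv 3 f y| ≤ M) :
    |f (x - h) - (f x - deriv f x * h + iteratedDeriv 2 f x * h ^ 2 / 2)| ≤ M * h ^ 3 / 2 := by
  set g : ℝ → ℝ := fun t => f (2 * x + -t) with hg
  have hgc : ContDiff ℝ 3 g := hf.comp (contDiff_const.add contDiff_neg)
  have hk : ∀ (n : ℕ) (a : ℝ), iteratedDeriv n g a = (-1 : ℝ) ^ n * iteratedDeriv n f (2 * x + -a) := by
    intro n a
    have h1 := iteratedDeriv_comp_neg (𝕜 := ℝ) n (fun u => f (2 * x + u)) a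
    have h2 := iteratedDeriv_comp_const_add (𝕜 := ℝ) n f (2 * x)
    rw [h2] at h1
    simpa [smul_eq_mul] using h1
  have hMg : ∀ y ∈ Icc x (x + h), |iteratedDeriv 3 g y| ≤ M := by
    intro y hy
    rw [hk 3 y]
    rw [abs_mul]
    simp only [abs_pow, abs_neg, abs_one, one_pow, one_mul]
    exact hM _ ⟨by rcases hy with ⟨h1, h2⟩; linarith, by rcases hy with ⟨h1, h2⟩; linarith⟩
  have hT := taylor2_bound hgc hh hMg
  have e0 : g (x + h) = f (x - h) := by simp only [hg]; ring_nf
  have e1 : g x = f x := by simp only [hg]; ring_nf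
  have e2 : deriv g x = -deriv f x := by
    rw [← iteratedDeriv_one, hk 1 x, ← iteratedDeriv_one]
    ring_nf
  have e3 : iteratedDeriv 2 g x = iteratedDeriv 2 f x := by
    rw [hk 2 x]; ring_nf
  rw [e0, e1, e2, e3] at hT
  convert hT using 2
  ring

private lemma quad_est (a1 a2 M d Ep Em : ℝ) (hM : 0 ≤ M) (hd0 : 0 < d) (hd1 : d < 1)
    (hp : |Ep| ≤ M * d ^ 3 / 2) (hm : |Em| ≤ M * d ^ 3 / 2) :
    |13 / 12 * (a2 * d ^ 2 + Em + Ep) ^ 2 + 1 / 4 * (2 * a1 * d + Ep - Em) ^ 2 - a1 ^ 2 * d ^ 2|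
      ≤ (13 / 12 * a2 ^ 2 + 13 / 6 * |a2| * M + 13 / 12 * M ^ 2 + |a1| * M + M ^ 2 / 4 + 1)
        * d ^ 4 := by
  obtain ⟨hp1, hp2⟩ := abs_le.mp hp
  obtain ⟨hm1, hm2⟩ := abs_le.mp hm
  have hd4 : 0 < d ^ 4 := by positivity
  have h1d : 0 ≤ 1 - d := by linarith
  have h1d2 : 0 ≤ 1 - d ^ 2 := by nlinarith
  have hSabs : |Em + Ep| ≤ M * d ^ 3 := abs_le.mpr ⟨by linarith, by linarith⟩
  have hDabs : |Ep - Em| ≤ M * d ^ 3 := abs_le.mpr ⟨by linarith, by linarith⟩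
  have hSd : 0 ≤ M * d ^ 3 - (Em + Ep) := by linarith [abs_le.mp hSabs |>.2]
  have hSd' : 0 ≤ M * d ^ 3 + (Em + Ep) := by linarith [abs_le.mp hSabs |>.1]
  have hDd : 0 ≤ M * d ^ 3 - (Ep - Em) := by linarith [abs_le.mp hDabs |>.2]
  have hDd' : 0 ≤ M * d ^ 3 + (Ep - Em) := by linarith [abs_le.mp hDabs |>.1]
  have ht2 : (Em + Ep) ^ 2 ≤ M ^ 2 * d ^ 4 := by
    nlinarith [mul_nonneg hSd hSd',
      mul_nonneg (mul_nonneg (sq_nonneg M) hd4.le) h1d2]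
  have ht4 : (Ep - Em) ^ 2 ≤ M ^ 2 * d ^ 4 := by
    nlinarith [mul_nonneg hDd hDd',
      mul_nonneg (mul_nonneg (sq_nonneg M) hd4.le) h1d2]
  have haS := abs_le.mp ((abs_mul a2 (Em + Ep)) ▸
    mul_le_mul_of_nonneg_left hSabs (abs_nonneg a2))
  have haD := abs_le.mp ((abs_mul a1 (Ep - Em)) ▸
    mul_le_mul_of_nonneg_left hDabs (abs_nonneg a1))
  have ht1u : 13 / 6 * (a2 * (Em + Ep)) * d ^ 2 ≤ 13 / 6 * (|a2| * M) * d ^ 4 := by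
    linarith [mul_le_mul_of_nonneg_right haS.2 (sq_nonneg d),
      mul_nonneg (mul_nonneg (mul_nonneg (abs_nonneg a2) hM) hd4.le) h1d]
  have ht1l : -(13 / 6 * (|a2| * M) * d ^ 4) ≤ 13 / 6 * (a2 * (Em + Ep)) * d ^ 2 := by
    linarith [mul_le_mul_of_nonneg_right haS.1 (sq_nonneg d),
      mul_nonneg (mul_nonneg (mul_nonneg (abs_nonneg a2) hM) hd4.le) h1d]
  have ht3u : a1 * (Ep - Em) * d ≤ |a1| * M * d ^ 4 := by
    linarith [mul_le_mul_of_nonneg_right haD.2 hd0.le]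
  have ht3l : -(|a1| * M * d ^ 4) ≤ a1 * (Ep - Em) * d := by
    linarith [mul_le_mul_of_nonneg_right haD.1 hd0.le]
  have hiden : 13 / 12 * (a2 * d ^ 2 + Em + Ep) ^ 2 + 1 / 4 * (2 * a1 * d + Ep - Em) ^ 2
      - a1 ^ 2 * d ^ 2
      = 13 / 12 * a2 ^ 2 * d ^ 4 + 13 / 6 * (a2 * (Em + Ep)) * d ^ 2
        + 13 / 12 * (Em + Ep) ^ 2 + a1 * (Ep - Em) * d + (Ep - Em) ^ 2 / 4 := by ring
  rw [hiden, abs_le]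
  constructor <;>
    linarith [ht1u, ht1l, ht2, ht3u, ht3l, ht4, hd4, sq_nonneg (Em + Ep),
      sq_nonneg (Ep - Em), mul_nonneg (sq_nonneg a2) hd4.le]

theorem beta1_taylor (f : ℝ → ℝ) (hf : ContDiff ℝ 3 f) (x : ℝ) :
    ∃ K > (0 : ℝ), ∃ δ > (0 : ℝ), ∀ Δx : ℝ, 0 < Δx → Δx < δ →
      |(13 / 12) * (f (x - Δx) - 2 * f x + f (x + Δx)) ^ 2 +
          (1 / 4) * (f (x + Δx) - f (x - Δx)) ^ 2 -
          (deriv f x) ^ 2 * Δx ^ 2| ≤ K * Δx ^ 4 := by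
  obtain ⟨C, hC⟩ := (isCompact_Icc (a := x - 1) (b := x + 1)).exists_bound_of_continuousOn
    ((hf.continuous_iteratedDeriv 3 le_rfl).continuousOn)
  set M : ℝ := max C 0 with hMdef
  have hM0 : 0 ≤ M := le_max_right _ _
  have hM : ∀ y ∈ Set.Icc (x - 1) (x + 1), |iteratedDeriv 3 f y| ≤ M := fun y hy =>
    ((Real.norm_eq_abs _).symm ▸ hC y hy).trans (le_max_left _ _)
  refine ⟨13 / 12 * (iteratedDeriv 2 f x) ^ 2 + 13 / 6 * |iteratedDeriv 2 f x| * M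
    + 13 / 12 * M ^ 2 + |deriv f x| * M + M ^ 2 / 4 + 1, by positivity, 1, one_pos, ?_⟩
  intro d hd0 hd1
  have hp := taylor2_bound hf hd0 (fun y hy => hM y
    ⟨by linarith [hy.1], by linarith [hy.2]⟩)
  have hm := taylor2_bound_neg hf hd0 (fun y hy => hM y
    ⟨by linarith [hy.1], by linarith [hy.2]⟩)
  have key := quad_est (deriv f x) (iteratedDeriv 2 f x) M d
    (f (x + d) - (f x + deriv f x * d + iteratedDeriv 2 f x * d ^ 2 / 2))
    (f (x - d) - (f x - deriv f x * d + iteratedDeriv 2 f x * d ^ 2 / 2))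
    hM0 hd0 hd1 hp hm
  calc |13 / 12 * (f (x - d) - 2 * f x + f (x + d)) ^ 2
        + 1 / 4 * (f (x + d) - f (x - d)) ^ 2 - deriv f x ^ 2 * d ^ 2|
      = |13 / 12 * (iteratedDeriv 2 f x * d ^ 2
          + (f (x - d) - (f x - deriv f x * d + iteratedDeriv 2 f x * d ^ 2 / 2))
          + (f (x + d) - (f x + deriv f x * d + iteratedDeriv 2 f x * d ^ 2 / 2))) ^ 2
        + 1 / 4 * (2 * deriv f x * d
          + (f (x + d) - (f x + deriv f x * d + iteratedDeriv 2 f x * d ^ 2 / 2))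
          - (f (x - d) - (f x - deriv f x * d + iteratedDeriv 2 f x * d ^ 2 / 2))) ^ 2
        - deriv f x ^ 2 * d ^ 2| := by congr 1; ring
    _ ≤ _ := key
end

section
/- For a five times continuously differentiable function h on a uniform grid x_j with spacing Δx, if f(x_j) = (1/Δx)∫_{x_j−Δx/2}^{x_j+Δx/2} h(ξ)dξ for all j, then (2f_{i−2} − 13f_{i−1} + 47f_i + 27f_{i+1} − 3f_{i+2})/60 = h(x_{i+1/2}) + O(Δx⁵). -/
open Set

private lemma idw_eq {n : ℕ} {f : ℝ → ℝ} (hf : ContDiff ℝ n f) {s : Set ℝ}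
    (hs : UniqueDiffOn ℝ s) {y : ℝ} (hy : y ∈ s) :
    iteratedDerivWithin n f s y = iteratedDeriv n f y := by
  have hf' : ContDiff ℝ ((n : ℕ∞) : WithTop ℕ∞) f := by exact_mod_cast hf
  rw [iteratedDerivWithin_eq_iteratedFDerivWithin, iteratedDeriv_eq_iteratedFDeriv]
  congr 1
  exact (((contDiff_iff_ftaylorSeries.mp hf').hasFTaylorSeriesUpToOn
    s).eq_iteratedFDerivWithin_of_uniqueDiffOn (by exact_mod_cast le_rfl) hs hy).symm

set_option maxHeartbeats 2000000 in
theorem weno_linear_fifth_order (h : ℝ → ℝ) (hh : ContDiff ℝ 5 h) (x : ℝ) :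
    ∃ K > (0 : ℝ), ∃ δ > (0 : ℝ), ∀ Δx : ℝ, 0 < Δx → Δx < δ →
      ∀ F : ℝ → ℝ,
        (∀ t : ℝ, F t = (1 / Δx) * ∫ ξ in (t - Δx / 2)..(t + Δx / 2), h ξ) →
        |(2 * F (x - 2 * Δx) - 13 * F (x - Δx) + 47 * F x + 27 * F (x + Δx)
            - 3 * F (x + 2 * Δx)) / 60 - h (x + Δx / 2)| ≤ K * Δx ^ 5 := by
  have hcont : Continuous h := hh.continuous
  set H : ℝ → ℝ := fun t => ∫ s in (0:ℝ)..t, h s with hHdef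
  have hdH : ∀ t : ℝ, HasDerivAt H (h t) t := fun t =>
    (hcont.integral_hasStrictDerivAt 0 t).hasDerivAt
  have hDiffH : Differentiable ℝ H := fun t => (hdH t).differentiableAt
  have hderH : deriv H = h := funext fun t => (hdH t).deriv
  have hH6 : ContDiff ℝ 6 H := by
    rw [show (6 : WithTop ℕ∞) = 5 + 1 by norm_num, contDiff_succ_iff_deriv]
    refine ⟨hDiffH, by simp, hderH ▸ hh⟩
  have hiD6 : iteratedDeriv 6 H = iteratedDeriv 5 h := by
    rw [show (6:ℕ) = 5 + 1 from rfl, iteratedDeriv_succ', hderH]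
  obtain ⟨C, hC⟩ := (isCompact_Icc (a := x - 3) (b := x + 3)).exists_bound_of_continuousOn
    (hh.continuous_iteratedDeriv 5 le_rfl).continuousOn
  have hC0 : 0 ≤ C := le_trans (norm_nonneg _)
    (hC x ⟨by linarith, by linarith⟩)
  refine ⟨300 * C + 1, by positivity, 1, one_pos, ?_⟩
  intro Δx hΔ hΔ1 F hF
  have hΔne : Δx ≠ 0 := ne_of_gt hΔ
  have hab : x - 5 * Δx / 2 ≤ x + 5 * Δx / 2 := by linarith
  have hab' : x - 5 * Δx / 2 < x + 5 * Δx / 2 := by linarith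
  have hUD : UniqueDiffOn ℝ (Icc (x - 5 * Δx / 2) (x + 5 * Δx / 2)) := uniqueDiffOn_Icc hab'
  have hsub : Icc (x - 5 * Δx / 2) (x + 5 * Δx / 2) ⊆ Icc (x - 3) (x + 3) :=
    Icc_subset_Icc (by linarith) (by linarith)
  set d : ℕ → ℝ := fun k => iteratedDeriv k H (x - 5 * Δx / 2) with hd
  have haIcc : (x - 5 * Δx / 2) ∈ Icc (x - 5 * Δx / 2) (x + 5 * Δx / 2) := ⟨le_rfl, hab⟩
  have hHOn : ContDiffOn ℝ ((5:ℕ) + 1) H (Icc (x - 5 * Δx / 2) (x + 5 * Δx / 2)) := by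
    apply ContDiff.contDiffOn
    exact_mod_cast hH6
  have hhOn : ContDiffOn ℝ ((4:ℕ) + 1) h (Icc (x - 5 * Δx / 2) (x + 5 * Δx / 2)) := by
    apply ContDiff.contDiffOn
    exact_mod_cast hh
  have hC6 : ∀ y ∈ Icc (x - 5 * Δx / 2) (x + 5 * Δx / 2),
      ‖iteratedDerivWithin ((5:ℕ)+1) H (Icc (x - 5 * Δx / 2) (x + 5 * Δx / 2)) y‖ ≤ C := by
    intro y hy
    rw [show (5:ℕ)+1 = 6 from rfl, idw_eq (by exact_mod_cast hH6) hUD hy, hiD6]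
    exact hC y (hsub hy)
  have hC5 : ∀ y ∈ Icc (x - 5 * Δx / 2) (x + 5 * Δx / 2),
      ‖iteratedDerivWithin ((4:ℕ)+1) h (Icc (x - 5 * Δx / 2) (x + 5 * Δx / 2)) y‖ ≤ C := by
    intro y hy
    rw [show (4:ℕ)+1 = 5 from rfl, idw_eq (by exact_mod_cast hh) hUD hy]
    exact hC y (hsub hy)
  set P : ℝ → ℝ := fun t => taylorWithinEval H 5 (Icc (x - 5 * Δx / 2) (x + 5 * Δx / 2))
    (x - 5 * Δx / 2) t with hPdef
  have hRb : ∀ p ∈ Icc (x - 5 * Δx / 2) (x + 5 * Δx / 2),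
      |H p - P p| ≤ C * (p - (x - 5 * Δx / 2)) ^ 6 / 120 := by
    intro p hp
    calc |H p - P p|
        ≤ C * (p - (x - 5 * Δx / 2)) ^ (5 + 1) / (Nat.factorial 5) :=
          taylor_mean_remainder_bound (n := 5) hab hHOn hp hC6
      _ = C * (p - (x - 5 * Δx / 2)) ^ 6 / 120 := by norm_num [Nat.factorial]
  have key6 : ∀ p ∈ Icc (x - 5 * Δx / 2) (x + 5 * Δx / 2),
      |H p - P p| ≤ C * (5 * Δx) ^ 6 / 120 := by
    intro p hp
    refine (hRb p hp).trans ?_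
    have h2 : |p - (x - 5 * Δx / 2)| ≤ 5 * Δx := by
      rw [abs_le]; exact ⟨by linarith [hp.1], by linarith [hp.2]⟩
    have h1 : (p - (x - 5 * Δx / 2)) ^ 6 ≤ (5 * Δx) ^ 6 :=
      calc (p - (x - 5 * Δx / 2)) ^ 6 ≤ |(p - (x - 5 * Δx / 2)) ^ 6| := le_abs_self _
        _ = |p - (x - 5 * Δx / 2)| ^ 6 := abs_pow _ _
        _ ≤ (5 * Δx) ^ 6 := pow_le_pow_left₀ (abs_nonneg _) h2 6
    have := mul_le_mul_of_nonneg_left h1 hC0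
    linarith
  have hidwH : ∀ k : ℕ, k ≤ 6 →
      iteratedDerivWithin k H (Icc (x - 5 * Δx / 2) (x + 5 * Δx / 2)) (x - 5 * Δx / 2) = d k :=
    fun k hk => idw_eq (hH6.of_le (by exact_mod_cast hk)) hUD haIcc
  have hidwh : ∀ k : ℕ, k ≤ 5 →
      iteratedDerivWithin k h (Icc (x - 5 * Δx / 2) (x + 5 * Δx / 2)) (x - 5 * Δx / 2)
        = d (k + 1) := by
    intro k hk
    rw [idw_eq (hh.of_le (by exact_mod_cast hk)) hUD haIcc, hd]
    simp only [iteratedDeriv_succ', hderH]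
  have hPt : ∀ t : ℝ, P t = d 0 + (t - (x - 5 * Δx / 2)) * d 1
      + (t - (x - 5 * Δx / 2)) ^ 2 / 2 * d 2 + (t - (x - 5 * Δx / 2)) ^ 3 / 6 * d 3
      + (t - (x - 5 * Δx / 2)) ^ 4 / 24 * d 4 + (t - (x - 5 * Δx / 2)) ^ 5 / 120 * d 5 := by
    intro t
    simp only [hPdef]
    rw [taylor_within_apply]
    rw [Finset.sum_range_succ, Finset.sum_range_succ, Finset.sum_range_succ,
      Finset.sum_range_succ, Finset.sum_range_succ, Finset.sum_range_succ,
      Finset.sum_range_zero]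
    rw [hidwH 0 (by norm_num), hidwH 1 (by norm_num), hidwH 2 (by norm_num),
      hidwH 3 (by norm_num), hidwH 4 (by norm_num), hidwH 5 (by norm_num)]
    simp [Nat.factorial, smul_eq_mul]
    ring
  have hQc : taylorWithinEval h 4 (Icc (x - 5 * Δx / 2) (x + 5 * Δx / 2)) (x - 5 * Δx / 2)
      (x + Δx / 2) = d 1 + (3 * Δx) * d 2 + (3 * Δx) ^ 2 / 2 * d 3
      + (3 * Δx) ^ 3 / 6 * d 4 + (3 * Δx) ^ 4 / 24 * d 5 := by
    rw [taylor_within_apply]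
    rw [Finset.sum_range_succ, Finset.sum_range_succ, Finset.sum_range_succ,
      Finset.sum_range_succ, Finset.sum_range_succ, Finset.sum_range_zero]
    rw [hidwh 0 (by norm_num), hidwh 1 (by norm_num), hidwh 2 (by norm_num),
      hidwh 3 (by norm_num), hidwh 4 (by norm_num)]
    rw [show x + Δx / 2 - (x - 5 * Δx / 2) = 3 * Δx by ring]
    simp [Nat.factorial, smul_eq_mul]
    ring
  have hcIcc : (x + Δx / 2) ∈ Icc (x - 5 * Δx / 2) (x + 5 * Δx / 2) :=
    ⟨by linarith, by linarith⟩
  have hQb : |h (x + Δx / 2) - taylorWithinEval h 4 (Icc (x - 5 * Δx / 2) (x + 5 * Δx / 2))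
      (x - 5 * Δx / 2) (x + Δx / 2)| ≤ C * (3 * Δx) ^ 5 / 24 := by
    calc |h (x + Δx / 2) - taylorWithinEval h 4 (Icc (x - 5 * Δx / 2) (x + 5 * Δx / 2))
          (x - 5 * Δx / 2) (x + Δx / 2)|
        ≤ C * (x + Δx / 2 - (x - 5 * Δx / 2)) ^ (4 + 1) / (Nat.factorial 4) :=
          taylor_mean_remainder_bound (n := 4) hab hhOn hcIcc hC5
      _ = C * (3 * Δx) ^ 5 / 24 := by
          rw [show x + Δx / 2 - (x - 5 * Δx / 2) = 3 * Δx by ring]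
          norm_num [Nat.factorial]
  have hint : ∀ p q : ℝ, (∫ ξ in p..q, h ξ) = H q - H p := fun p q =>
    (intervalIntegral.integral_interval_sub_left (hcont.intervalIntegrable _ _)
      (hcont.intervalIntegrable _ _)).symm
  have hFt : ∀ t : ℝ, F t = (1 / Δx) * (H (t + Δx / 2) - H (t - Δx / 2)) := fun t => by
    rw [hF t, hint]
  have hF1 : F (x - 2 * Δx) = (1 / Δx) * (H (x - 3 * Δx / 2) - H (x - 5 * Δx / 2)) := by
    rw [hFt, show x - 2 * Δx + Δx / 2 = x - 3 * Δx / 2 by ring,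
      show x - 2 * Δx - Δx / 2 = x - 5 * Δx / 2 by ring]
  have hF2 : F (x - Δx) = (1 / Δx) * (H (x - Δx / 2) - H (x - 3 * Δx / 2)) := by
    rw [hFt, show x - Δx + Δx / 2 = x - Δx / 2 by ring,
      show x - Δx - Δx / 2 = x - 3 * Δx / 2 by ring]
  have hF3 : F x = (1 / Δx) * (H (x + Δx / 2) - H (x - Δx / 2)) := hFt x
  have hF4 : F (x + Δx) = (1 / Δx) * (H (x + 3 * Δx / 2) - H (x + Δx / 2)) := by
    rw [hFt, show x + Δx + Δx / 2 = x + 3 * Δx / 2 by ring,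
      show x + Δx - Δx / 2 = x + Δx / 2 by ring]
  have hF5 : F (x + 2 * Δx) = (1 / Δx) * (H (x + 5 * Δx / 2) - H (x + 3 * Δx / 2)) := by
    rw [hFt, show x + 2 * Δx + Δx / 2 = x + 5 * Δx / 2 by ring,
      show x + 2 * Δx - Δx / 2 = x + 3 * Δx / 2 by ring]
  have main : (2 * F (x - 2 * Δx) - 13 * F (x - Δx) + 47 * F x + 27 * F (x + Δx)
      - 3 * F (x + 2 * Δx)) / 60 - h (x + Δx / 2)
      = (taylorWithinEval h 4 (Icc (x - 5 * Δx / 2) (x + 5 * Δx / 2)) (x - 5 * Δx / 2)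
          (x + Δx / 2) - h (x + Δx / 2))
        + (1 / (60 * Δx)) * (-2 * (H (x - 5 * Δx / 2) - P (x - 5 * Δx / 2))
          + 15 * (H (x - 3 * Δx / 2) - P (x - 3 * Δx / 2))
          - 60 * (H (x - Δx / 2) - P (x - Δx / 2))
          + 20 * (H (x + Δx / 2) - P (x + Δx / 2))
          + 30 * (H (x + 3 * Δx / 2) - P (x + 3 * Δx / 2))
          - 3 * (H (x + 5 * Δx / 2) - P (x + 5 * Δx / 2))) := by
    rw [hF1, hF2, hF3, hF4, hF5, hQc, hPt, hPt, hPt, hPt, hPt, hPt]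
    field_simp
    ring
  rw [main]
  have hB0 := key6 _ haIcc
  have hB1 := key6 (x - 3 * Δx / 2) ⟨by linarith, by linarith⟩
  have hB2 := key6 (x - Δx / 2) ⟨by linarith, by linarith⟩
  have hB3 := key6 (x + Δx / 2) hcIcc
  have hB4 := key6 (x + 3 * Δx / 2) ⟨by linarith, by linarith⟩
  have hB5 := key6 (x + 5 * Δx / 2) ⟨by linarith, le_rfl⟩
  have hcombo : |(-2 * (H (x - 5 * Δx / 2) - P (x - 5 * Δx / 2))
      + 15 * (H (x - 3 * Δx / 2) - P (x - 3 * Δx / 2))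
      - 60 * (H (x - Δx / 2) - P (x - Δx / 2))
      + 20 * (H (x + Δx / 2) - P (x + Δx / 2))
      + 30 * (H (x + 3 * Δx / 2) - P (x + 3 * Δx / 2))
      - 3 * (H (x + 5 * Δx / 2) - P (x + 5 * Δx / 2)))|
      ≤ 130 * (C * (5 * Δx) ^ 6 / 120) := by
    rw [abs_le] at hB0 hB1 hB2 hB3 hB4 hB5 ⊢
    constructor <;> [nlinarith [hB0.1, hB0.2, hB1.1, hB1.2, hB2.1, hB2.2, hB3.1, hB3.2,
      hB4.1, hB4.2, hB5.1, hB5.2]; nlinarith [hB0.1, hB0.2, hB1.1, hB1.2, hB2.1, hB2.2,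
      hB3.1, hB3.2, hB4.1, hB4.2, hB5.1, hB5.2]]
  have habsB : |(1 / (60 * Δx))| = 1 / (60 * Δx) := abs_of_pos (by positivity)
  calc |(taylorWithinEval h 4 (Icc (x - 5 * Δx / 2) (x + 5 * Δx / 2)) (x - 5 * Δx / 2)
          (x + Δx / 2) - h (x + Δx / 2))
        + (1 / (60 * Δx)) * (-2 * (H (x - 5 * Δx / 2) - P (x - 5 * Δx / 2))
          + 15 * (H (x - 3 * Δx / 2) - P (x - 3 * Δx / 2))
          - 60 * (H (x - Δx / 2) - P (x - Δx / 2))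
          + 20 * (H (x + Δx / 2) - P (x + Δx / 2))
          + 30 * (H (x + 3 * Δx / 2) - P (x + 3 * Δx / 2))
          - 3 * (H (x + 5 * Δx / 2) - P (x + 5 * Δx / 2)))|
      ≤ C * (3 * Δx) ^ 5 / 24 + (1 / (60 * Δx)) * (130 * (C * (5 * Δx) ^ 6 / 120)) := by
        refine (abs_add_le _ _).trans ?_
        have e1 : |taylorWithinEval h 4 (Icc (x - 5 * Δx / 2) (x + 5 * Δx / 2))
            (x - 5 * Δx / 2) (x + Δx / 2) - h (x + Δx / 2)| ≤ C * (3 * Δx) ^ 5 / 24 := by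
          rw [abs_sub_comm]; exact hQb
        have e2 : |(1 / (60 * Δx)) * (-2 * (H (x - 5 * Δx / 2) - P (x - 5 * Δx / 2))
          + 15 * (H (x - 3 * Δx / 2) - P (x - 3 * Δx / 2))
          - 60 * (H (x - Δx / 2) - P (x - Δx / 2))
          + 20 * (H (x + Δx / 2) - P (x + Δx / 2))
          + 30 * (H (x + 3 * Δx / 2) - P (x + 3 * Δx / 2))
          - 3 * (H (x + 5 * Δx / 2) - P (x + 5 * Δx / 2)))|
            ≤ (1 / (60 * Δx)) * (130 * (C * (5 * Δx) ^ 6 / 120)) := by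
          rw [abs_mul, habsB]
          exact mul_le_mul_of_nonneg_left hcombo (by positivity)
        linarith
    _ ≤ (300 * C + 1) * Δx ^ 5 := by
        have e3 : (1 / (60 * Δx)) * (130 * (C * (5 * Δx) ^ 6 / 120))
            = C * Δx ^ 5 * (2031250 / 7200) := by
          field_simp
          ring
        rw [e3]
        have h5 : 0 ≤ Δx ^ 5 := by positivity
        nlinarith [mul_nonneg hC0 h5]
end

section
/- For the Jiang–Shu smoothness indicator defined by β_m = Σ_{q=1}^{2} Δx^{2q−1} ∫_{x_{i−1/2}}^{x_{i+1/2}} (d^q p/dx^q)² dx, where p is the quadratic interpolating f_{i−1}, f_i, f_{i+1} at x_{i−1}, x_i, x_{i+1}, one has the closed form β_1 = (13/12)(f_{i−1} − 2f_i + f_{i+1})² + (1/4)(f_{i+1} − f_{i−1})². -/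
/-!
Since `p'` is affine and `p''` constant, both integrals are elementary: over a cell of width `h`
centred at `x`, `∫ (a + b t)² = h (a + b x)² + b² h³ / 12`. For a quadratic the grid values satisfy
`f₁ - f₋₁ = 2 Δx p'(x)` and `f₋₁ - 2 f₀ + f₁ = Δx² p''(x)`, so both sides equal
`Δx² p'(x)² + (13/12) Δx⁴ p''(x)²`.
-/

open Polynomial MeasureTheory

theorem integral_sq_affine_centered (a b x h : ℝ) :
    ∫ t in (x - h / 2)..(x + h / 2), (a + b * t) ^ 2 = h * (a + b * x) ^ 2 + b ^ 2 * h ^ 3 / 12 := by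
  have expand : ∀ t : ℝ, (a + b * t) ^ 2 = a ^ 2 + 2 * a * b * t + b ^ 2 * t ^ 2 := fun t => by ring
  simp only [expand]
  have hint {f : ℝ → ℝ} (hf : Continuous f) : IntervalIntegrable f volume (x - h / 2) (x + h / 2) :=
    hf.intervalIntegrable _ _
  rw [intervalIntegral.integral_add (hint (by fun_prop)) (hint (by fun_prop)),
    intervalIntegral.integral_add (hint (by fun_prop)) (hint (by fun_prop)),
    intervalIntegral.integral_const_mul, intervalIntegral.integral_const_mul, integral_pow,
    integral_id, intervalIntegral.integral_const, smul_eq_mul]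
  ring

namespace Polynomial
variable {R : Type*} [CommSemiring R] {p : R[X]}

theorem eval_of_degree_le_two (hp : p.degree ≤ 2) (t : R) :
    p.eval t = p.coeff 2 * t ^ 2 + p.coeff 1 * t + p.coeff 0 := by
  conv_lhs => rw [eq_quadratic_of_degree_le_two hp]
  simp only [eval_add, eval_mul, eval_C, eval_pow, eval_X]

theorem eval_derivative_of_degree_le_two (hp : p.degree ≤ 2) (t : R) :
    p.derivative.eval t = p.coeff 1 + 2 * p.coeff 2 * t := by
  conv_lhs => rw [eq_quadratic_of_degree_le_two hp]
  simp only [derivative_add, derivative_C_mul, derivative_X_pow, derivative_X, derivative_C, eval_add,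
    eval_mul, eval_C, eval_pow, eval_X, eval_one, eval_zero, Nat.cast_ofNat]
  ring

theorem eval_derivative_derivative_of_degree_le_two (hp : p.degree ≤ 2) (t : R) :
    p.derivative.derivative.eval t = 2 * p.coeff 2 := by
  conv_lhs => rw [eq_quadratic_of_degree_le_two hp]
  simp only [derivative_add, derivative_C_mul, derivative_X_pow, derivative_X, derivative_C,
    derivative_zero, derivative_one, eval_add, eval_mul, eval_C, eval_pow, eval_X, eval_zero, Nat.cast_ofNat]
  ring

end Polynomial

theorem beta1_closed_form_general (p : Polynomial ℝ) (hp : p.degree ≤ 2)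
    (x Δx : ℝ) (fm1 f0 f1 : ℝ)
    (h0 : p.eval (x - Δx) = fm1) (h1 : p.eval x = f0) (h2 : p.eval (x + Δx) = f1) :
    Δx * (∫ t in (x - Δx / 2)..(x + Δx / 2), (p.derivative.eval t) ^ 2) +
      Δx ^ 3 * (∫ t in (x - Δx / 2)..(x + Δx / 2), (p.derivative.derivative.eval t) ^ 2) =
    (13 / 12) * (fm1 - 2 * f0 + f1) ^ 2 + (1 / 4) * (f1 - fm1) ^ 2 := by
  simp only [eval_derivative_of_degree_le_two hp, eval_derivative_derivative_of_degree_le_two hp,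
    integral_sq_affine_centered, intervalIntegral.integral_const, smul_eq_mul]
  subst h0 h1 h2
  simp only [eval_of_degree_le_two hp]
  ring

theorem beta1_closed_form (p : Polynomial ℝ) (hp : p.degree ≤ 2)
    (x Δx : ℝ) (hΔx : 0 < Δx) (fm1 f0 f1 : ℝ)
    (h0 : p.eval (x - Δx) = fm1) (h1 : p.eval x = f0) (h2 : p.eval (x + Δx) = f1) :
    Δx * (∫ t in (x - Δx / 2)..(x + Δx / 2), (p.derivative.eval t) ^ 2) +
      Δx ^ 3 * (∫ t in (x - Δx / 2)..(x + Δx / 2), (p.derivative.derivative.eval t) ^ 2) =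
    (13 / 12) * (fm1 - 2 * f0 + f1) ^ 2 + (1 / 4) * (f1 - fm1) ^ 2 :=
  beta1_closed_form_general p hp x Δx fm1 f0 f1 h0 h1 h2
end
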